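/- arXiv:1606.09197 — 2 statements merged into one kernel-verified Lean document; each statement's English description precedes it below -/
import Mathlib

section
/- Lemma 2: Let p and q be two policies for the same finite-horizon MDP. For each time-step t let ε_t = KL(ρ_t^p ‖ ρ_t^q) be the Kullback–Leibler divergence between the state distributions of p and q at time t, and let δ_t = sup_{s∈S} |∫_A A_t^q(s,a) p_t(da|s)|, which is finite since the rewards are bounded. Assume ε_t < ∞ for all t. Then J(p) − J(q) ≥ Σ_{t=1}^T ∫_S ∫_A A_t^q(s,a) p_t(da|s) ρ_t^q(ds) − 2 Σ_{t=1}^T δ_t √(ε_t / 2). -/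
/-!
Writing each reward as `r_t = A_t^q + V_t^q - P V_{t+1}^q` and telescoping along the state
distributions of `p` gives the performance difference identity
`J(p) - J(q) = Σ_t ∫ (∫ A_t^q(s, a) p_t(da|s)) ρ_t^p(ds)`.
Each summand is then transported from `ρ_t^p` to `ρ_t^q` at the cost of
`2 δ_t TV(ρ_t^p, ρ_t^q) ≤ 2 δ_t √(ε_t / 2)` (Pinsker's inequality). Pinsker's inequality in turn
follows from the pointwise bound `3 (x - 1)² ≤ (2x + 4) (x log x + 1 - x)`, applied to `g = dμ/dν`,
and Cauchy–Schwarz against the weight `(2g + 4) / 3`, whose `ν`-integral is `2`.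
-/

open MeasureTheory ProbabilityTheory
open scoped ENNReal

noncomputable section

namespace MDP

variable {S A : Type*} [MeasurableSpace S] [MeasurableSpace A]

/-- The state distribution `ρ_t^π` of a policy `π` (at the 0-indexed time-step `t`):
`ρ_0^π = ρ₁` and `ρ_{t+1}^π` is the pushforward through the transition kernel `P`
of the joint state–action measure obtained by composing `ρ_t^π` with the kernel `π_t`. -/
noncomputable def stateDist (ρ₁ : Measure S) (P : Kernel (S × A) S)
    (π : ℕ → Kernel S A) : ℕ → Measure S
  | 0 => ρ₁
  | (t + 1) =>
      Measure.bind (stateDist ρ₁ P π t) (fun s => Measure.bind (π t s) (fun a => P (s, a)))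

/-- Auxiliary value functions, indexed by the number `k` of remaining time-steps:
`Vk P π r T k = V^π_{T-k}` (with the convention `V^π_T = 0`, i.e. `V^π_{T+1} = 0` in the
1-indexed notation of the paper). -/
noncomputable def Vk (P : Kernel (S × A) S) (π : ℕ → Kernel S A)
    (r : ℕ → S → A → ℝ) (T : ℕ) : ℕ → S → ℝ
  | 0 => fun _ => 0
  | (k + 1) => fun s =>
      ∫ a, (r (T - (k + 1)) s a + ∫ s', Vk P π r T k s' ∂(P (s, a))) ∂(π (T - (k + 1)) s)

/-- The Q-function of policy `π` at (0-indexed) time-step `t`: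
`Q_t^π(s,a) = r_t(s,a) + ∫ V_{t+1}^π(s') P(ds'|s,a)`. -/
noncomputable def Qfun (P : Kernel (S × A) S) (π : ℕ → Kernel S A)
    (r : ℕ → S → A → ℝ) (T : ℕ) (t : ℕ) (s : S) (a : A) : ℝ :=
  r t s a + ∫ s', Vk P π r T (T - (t + 1)) s' ∂(P (s, a))

/-- The V-function of policy `π` at (0-indexed) time-step `t`. -/
noncomputable def Vfun (P : Kernel (S × A) S) (π : ℕ → Kernel S A)
    (r : ℕ → S → A → ℝ) (T : ℕ) (t : ℕ) (s : S) : ℝ :=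
  Vk P π r T (T - t) s

/-- The advantage function `A_t^π(s,a) = Q_t^π(s,a) − V_t^π(s)`. -/
noncomputable def Adv (P : Kernel (S × A) S) (π : ℕ → Kernel S A)
    (r : ℕ → S → A → ℝ) (T : ℕ) (t : ℕ) (s : S) (a : A) : ℝ :=
  Qfun P π r T t s a - Vfun P π r T t s

/-- The policy return `J(π) = Σ_{t=0}^{T-1} ∫_S ∫_A r_t(s,a) π_t(da|s) ρ_t^π(ds)`. -/
noncomputable def policyReturn (ρ₁ : Measure S) (P : Kernel (S × A) S)
    (r : ℕ → S → A → ℝ) (T : ℕ) (π : ℕ → Kernel S A) : ℝ :=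
  ∑ t ∈ Finset.range T, ∫ s, ∫ a, r t s a ∂(π t s) ∂(stateDist ρ₁ P π t)


/-- The Kullback–Leibler divergence `KL(μ‖ν) = ∫ log (dμ/dν) dμ`, with value `∞` when `μ` is not
absolutely continuous w.r.t. `ν` (or the log-likelihood ratio is not integrable). -/
noncomputable def klDiv {X : Type*} [MeasurableSpace X] (μ ν : Measure X) : ℝ≥0∞ :=
  haveI := Classical.propDecidable (μ ≪ ν ∧ Integrable (llr μ ν) μ)
  if μ ≪ ν ∧ Integrable (llr μ ν) μ then ENNReal.ofReal (∫ x, llr μ ν x ∂μ) else ⊤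

end MDP

section

variable {X Y : Type*} [MeasurableSpace X] [MeasurableSpace Y]

namespace MeasureTheory

open Real

lemma integral_le_sqrt_integral_sq_div_mul_sqrt_integral {μ : Measure X} {u w : X → ℝ}
    (hu : 0 ≤ u) (hw : ∀ x, 0 < w x) (hu_meas : Measurable u) (hw_meas : Measurable w)
    (huw_int : Integrable (fun x => u x ^ 2 / w x) μ) (hw_int : Integrable w μ) :
    ∫ x, u x ∂μ ≤ √(∫ x, u x ^ 2 / w x ∂μ) * √(∫ x, w x ∂μ) := by
  have hsq_div (x : X) : (u x / √(w x)) ^ 2 = u x ^ 2 / w x := by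
    rw [div_pow, sq_sqrt (hw x).le]
  have hsq_sqrt (x : X) : √(w x) ^ 2 = w x := sq_sqrt (hw x).le
  have hf : MemLp (fun x => u x / √(w x)) 2 μ :=
    (memLp_two_iff_integrable_sq (hu_meas.div hw_meas.sqrt).aestronglyMeasurable).mpr
      (by simpa only [Pi.div_apply, hsq_div] using huw_int)
  have hg : MemLp (fun x => √(w x)) 2 μ :=
    (memLp_two_iff_integrable_sq hw_meas.sqrt.aestronglyMeasurable).mpr
      (by simpa only [hsq_sqrt] using hw_int)
  have hholder := integral_mul_le_Lp_mul_Lq_of_nonneg (μ := μ) Real.HolderConjugate.two_two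
    (ae_of_all _ fun x => div_nonneg (hu x) (sqrt_nonneg _)) (ae_of_all _ fun x => sqrt_nonneg _)
    (by simpa using hf) (by simpa using hg)
  simp only [rpow_two, hsq_div, hsq_sqrt, ← sqrt_eq_rpow] at hholder
  refine le_of_eq_of_le (integral_congr_ae (ae_of_all _ fun x => ?_)) hholder
  rw [div_mul_cancel₀ _ (sqrt_pos.mpr (hw x)).ne']

theorem Measure.integral_comp {E : Type*} [NormedAddCommGroup E] [NormedSpace ℝ E]
    {μ : Measure X} {κ : Kernel X Y} {f : Y → E} (hf : Integrable f (κ ∘ₘ μ)) :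
    ∫ y, f y ∂(κ ∘ₘ μ) = ∫ x, ∫ y, f y ∂κ x ∂μ := by
  rw [Measure.comp_eq_comp_const_apply] at hf ⊢
  exact Kernel.integral_comp hf

end MeasureTheory

def BoundedMeasurable (f : X → ℝ) : Prop :=
  Measurable f ∧ ∃ C, ∀ x, |f x| ≤ C

namespace BoundedMeasurable

variable {f g : X → ℝ}

lemma integrable (hf : BoundedMeasurable f) (μ : Measure X) [IsFiniteMeasure μ] :
    Integrable f μ :=
  let ⟨hm, C, hC⟩ := hf
  .of_bound hm.aestronglyMeasurable C (ae_of_all _ hC)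

lemma bddAbove_range_abs (hf : BoundedMeasurable f) : BddAbove (Set.range fun x => |f x|) :=
  let ⟨_, C, hC⟩ := hf
  ⟨C, by rintro _ ⟨x, rfl⟩; exact hC x⟩

lemma const (c : ℝ) : BoundedMeasurable fun _ : X => c :=
  ⟨measurable_const, |c|, fun _ => le_rfl⟩

lemma add (hf : BoundedMeasurable f) (hg : BoundedMeasurable g) :
    BoundedMeasurable (f + g) :=
  let ⟨hfm, C, hC⟩ := hf
  let ⟨hgm, D, hD⟩ := hg
  ⟨hfm.add hgm, C + D, fun x => (abs_add_le _ _).trans (add_le_add (hC x) (hD x))⟩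

lemma sub (hf : BoundedMeasurable f) (hg : BoundedMeasurable g) :
    BoundedMeasurable (f - g) :=
  let ⟨hfm, C, hC⟩ := hf
  let ⟨hgm, D, hD⟩ := hg
  ⟨hfm.sub hgm, C + D, fun x => (abs_sub _ _).trans (add_le_add (hC x) (hD x))⟩

lemma comp {h : Y → X} (hf : BoundedMeasurable f) (hh : Measurable h) :
    BoundedMeasurable (f ∘ h) :=
  let ⟨hfm, C, hC⟩ := hf
  ⟨hfm.comp hh, C, fun y => hC (h y)⟩

lemma integral_kernel {F : X × Y → ℝ} (hF : BoundedMeasurable F) (κ : Kernel X Y)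
    [IsMarkovKernel κ] : BoundedMeasurable fun x => ∫ y, F (x, y) ∂κ x :=
  let ⟨hFm, C, hC⟩ := hF
  ⟨hFm.stronglyMeasurable.integral_kernel_prod_right'.measurable, C, fun x => by
    simpa using norm_integral_le_of_norm_le_const (μ := κ x) (f := fun y => F (x, y))
      (ae_of_all _ fun y => (Real.norm_eq_abs _).trans_le (hC (x, y)))⟩

end BoundedMeasurable

end

namespace InformationTheory

open Real Set

lemma monotoneOn_add_one_mul_log_sub :
    MonotoneOn (fun y => (y + 1) * log y - 2 * (y - 1)) (Ioi 0) := by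
  have hderiv (y : ℝ) (hy : 0 < y) :
      HasDerivAt (fun y => (y + 1) * log y - 2 * (y - 1)) (log y + y⁻¹ - 1) y := by
    refine ((((hasDerivAt_id y).add_const 1).mul (hasDerivAt_log hy.ne')).sub
      (((hasDerivAt_id y).sub_const 1).const_mul 2)).congr_deriv ?_
    field_simp
    simp only [id]
    ring
  refine monotoneOn_of_deriv_nonneg (convex_Ioi 0)
    (fun y hy => (hderiv y hy).continuousAt.continuousWithinAt) ?_ ?_ <;> rw [interior_Ioi]
  · exact fun y hy => (hderiv y hy).differentiableAt.differentiableWithinAt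
  · intro y hy
    rw [(hderiv y hy).deriv]
    linarith [one_sub_inv_le_log_of_pos (mem_Ioi.mp hy)]

lemma three_mul_sq_sub_one_le_mul_klFun {x : ℝ} (hx : 0 ≤ x) :
    3 * (x - 1) ^ 2 ≤ (2 * x + 4) * klFun x := by
  -- `F` vanishes at `1`, and its derivative `4 G` changes sign there since `G` is increasing.
  set F : ℝ → ℝ := fun y => (2 * y + 4) * klFun y - 3 * (y - 1) ^ 2
  set G : ℝ → ℝ := fun y => (y + 1) * log y - 2 * (y - 1)
  have hF_deriv (y : ℝ) (hy : 0 < y) : HasDerivAt F (4 * G y) y := by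
    refine ((((hasDerivAt_id y).const_mul 2).add_const 4).mul (hasDerivAt_klFun hy.ne')
      |>.sub ((((hasDerivAt_id y).sub_const 1).pow 2).const_mul 3)).congr_deriv ?_
    simp only [G, klFun, id]
    ring
  have hG_one : G 1 = 0 := by simp [G]
  have hF_one : F 1 = 0 := by simp [F, klFun_one]
  have hF_cont : Continuous F := by fun_prop
  suffices 0 ≤ F x by simp only [F] at this; linarith
  rcases le_total 1 x with h1 | h1
  · refine hF_one ▸ monotoneOn_of_deriv_nonneg (convex_Ici 1) hF_cont.continuousOn ?_ ?_
      self_mem_Ici h1 h1 <;> rw [interior_Ici]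
    · exact fun y hy => (hF_deriv y (one_pos.trans hy)).differentiableAt.differentiableWithinAt
    · intro y hy
      have := monotoneOn_add_one_mul_log_sub (mem_Ioi.mpr one_pos)
        (mem_Ioi.mpr (one_pos.trans hy)) hy.le
      rw [(hF_deriv y (one_pos.trans hy)).deriv]
      linarith
  · refine hF_one ▸ antitoneOn_of_deriv_nonpos (convex_Icc 0 1) hF_cont.continuousOn ?_ ?_
      ⟨hx, h1⟩ (right_mem_Icc.mpr zero_le_one) h1 <;> rw [interior_Icc]
    · exact fun y hy => (hF_deriv y hy.1).differentiableAt.differentiableWithinAt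
    · intro y hy
      have := monotoneOn_add_one_mul_log_sub hy.1 (mem_Ioi.mpr one_pos) hy.2.le
      rw [(hF_deriv y hy.1).deriv]
      linarith

variable {α : Type*} [MeasurableSpace α] {μ ν : Measure α}

lemma integral_abs_toReal_rnDeriv_sub_one_le [IsProbabilityMeasure μ] [IsProbabilityMeasure ν]
    (h : klDiv μ ν ≠ ∞) :
    ∫ x, |(μ.rnDeriv ν x).toReal - 1| ∂ν ≤ √(2 * (klDiv μ ν).toReal) := by
  obtain ⟨hac, hint⟩ := klDiv_ne_top_iff.mp h
  set g : α → ℝ := fun x => (μ.rnDeriv ν x).toReal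
  have hg_meas : Measurable g := (μ.measurable_rnDeriv ν).ennreal_toReal
  have hg_int : Integrable g ν := Measure.integrable_toReal_rnDeriv
  have hg_nonneg (x : α) : 0 ≤ g x := ENNReal.toReal_nonneg
  set w : α → ℝ := fun x => (2 * g x + 4) / 3
  have hw_pos (x : α) : 0 < w x := by have := hg_nonneg x; positivity
  have hw_int : Integrable w ν := ((hg_int.const_mul 2).add (integrable_const 4)).div_const 3
  have hw_integral : ∫ x, w x ∂ν = 2 := by
    rw [integral_div, integral_add (hg_int.const_mul 2) (integrable_const 4), integral_const_mul,
      Measure.integral_toReal_rnDeriv hac]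
    norm_num
  have hquot_le (x : α) : |g x - 1| ^ 2 / w x ≤ klFun (g x) := by
    rw [sq_abs, div_le_iff₀ (hw_pos x)]
    simp only [w]
    linarith [three_mul_sq_sub_one_le_mul_klFun (hg_nonneg x)]
  have hkl_int : Integrable (fun x => klFun (g x)) ν := (integrable_klFun_rnDeriv_iff hac).mpr hint
  have hquot_int : Integrable (fun x => |g x - 1| ^ 2 / w x) ν :=
    hkl_int.mono' (by fun_prop : Measurable _).aestronglyMeasurable (ae_of_all _ fun x => by
      rw [norm_of_nonneg (by have := hw_pos x; positivity)]; exact hquot_le x)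
  calc ∫ x, |g x - 1| ∂ν ≤ √(∫ x, |g x - 1| ^ 2 / w x ∂ν) * √(∫ x, w x ∂ν) :=
        MeasureTheory.integral_le_sqrt_integral_sq_div_mul_sqrt_integral (fun x => abs_nonneg _)
          hw_pos (by fun_prop) (by fun_prop) hquot_int hw_int
    _ ≤ √(klDiv μ ν).toReal * √2 := by
        rw [toReal_klDiv_eq_integral_klFun hac, hw_integral]
        exact mul_le_mul_of_nonneg_right
          (sqrt_le_sqrt (integral_mono hquot_int hkl_int hquot_le)) (sqrt_nonneg _)
    _ = √(2 * (klDiv μ ν).toReal) := by rw [← sqrt_mul ENNReal.toReal_nonneg, mul_comm]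

lemma abs_integral_sub_integral_le_of_klDiv_ne_top [IsProbabilityMeasure μ]
    [IsProbabilityMeasure ν] (h : klDiv μ ν ≠ ∞) {f : α → ℝ} (hf : AEStronglyMeasurable f ν)
    {δ : ℝ} (hfδ : ∀ x, |f x| ≤ δ) :
    |∫ x, f x ∂μ - ∫ x, f x ∂ν| ≤ 2 * δ * √((klDiv μ ν).toReal / 2) := by
  have hac : μ ≪ ν := (klDiv_ne_top_iff.mp h).1
  set g : α → ℝ := fun x => (μ.rnDeriv ν x).toReal
  have hδ : 0 ≤ δ := (abs_nonneg _).trans (hfδ (nonempty_of_isProbabilityMeasure ν).some)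
  have hfν : Integrable f ν := .of_bound hf δ (ae_of_all _ hfδ)
  have hfμ : Integrable f μ := .of_bound (hf.mono_ac hac) δ (ae_of_all _ hfδ)
  have hgf : Integrable (fun x => g x * f x) ν := (integrable_toReal_rnDeriv_mul_iff hac).mpr hfμ
  have hg₁ : Integrable (fun x => |g x - 1|) ν :=
    (Measure.integrable_toReal_rnDeriv.sub (integrable_const 1)).abs
  calc |∫ x, f x ∂μ - ∫ x, f x ∂ν| = |∫ x, (g x - 1) * f x ∂ν| := by
        rw [← integral_toReal_rnDeriv_mul hac, ← integral_sub hgf hfν]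
        simp only [sub_one_mul]
    _ ≤ ∫ x, |g x - 1| * δ ∂ν :=
        norm_integral_le_of_norm_le (hg₁.mul_const δ) (ae_of_all _ fun x => by
          rw [norm_eq_abs, abs_mul]
          exact mul_le_mul_of_nonneg_left (hfδ x) (abs_nonneg _))
    _ = δ * ∫ x, |g x - 1| ∂ν := by rw [integral_mul_const, mul_comm]
    _ ≤ δ * √(2 * (klDiv μ ν).toReal) :=
        mul_le_mul_of_nonneg_left (integral_abs_toReal_rnDeriv_sub_one_le h) hδ
    _ = 2 * δ * √((klDiv μ ν).toReal / 2) := by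
        rw [show 2 * (klDiv μ ν).toReal = 2 ^ 2 * ((klDiv μ ν).toReal / 2) by ring,
          sqrt_mul (by norm_num), sqrt_sq (by norm_num)]
        ring

end InformationTheory

namespace MDP

variable {S A : Type*} [MeasurableSpace S] [MeasurableSpace A]

-- Mathlib's `klDiv` carries the extra term `ν.real univ - μ.real univ` inside `ENNReal.ofReal`.
lemma klDiv_eq_klDiv {X : Type*} [MeasurableSpace X] {μ ν : Measure X}
    (h : μ Set.univ = ν Set.univ) : klDiv μ ν = InformationTheory.klDiv μ ν := by
  by_cases hc : μ ≪ ν ∧ Integrable (llr μ ν) μ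
  · rw [klDiv, if_pos hc, InformationTheory.klDiv_of_ac_of_integrable hc.1 hc.2, measureReal_def,
      measureReal_def, h, add_sub_cancel_right]
  · rw [klDiv, if_neg hc, eq_comm, InformationTheory.klDiv_eq_top_iff]
    exact fun hac hint => hc ⟨hac, hint⟩

section

variable (P : Kernel (S × A) S)

def stepKernel (κ : Kernel S A) : Kernel S S :=
  P ∘ₖ (Kernel.id ×ₖ κ)

lemma stepKernel_apply (κ : Kernel S A) [IsSFiniteKernel κ] (s : S) :
    stepKernel P κ s = (κ s).bind fun a => P (s, a) := by
  rw [stepKernel, Kernel.comp_apply, Kernel.prod_apply, Kernel.id_apply, Measure.dirac_prod,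
    Measure.bind, Measure.map_map P.measurable measurable_prodMk_left]
  rfl

instance [IsMarkovKernel P] (κ : Kernel S A) [IsMarkovKernel κ] :
    IsMarkovKernel (stepKernel P κ) := by
  unfold stepKernel; infer_instance

variable (ρ₁ : Measure S) (π : ℕ → Kernel S A) [∀ t, IsMarkovKernel (π t)]

lemma stateDist_succ (t : ℕ) :
    stateDist ρ₁ P π (t + 1) = stepKernel P (π t) ∘ₘ stateDist ρ₁ P π t := by
  rw [stateDist]
  congr with s : 1
  rw [stepKernel_apply]

variable [IsProbabilityMeasure ρ₁] [IsMarkovKernel P]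

instance isProbabilityMeasure_stateDist (t : ℕ) : IsProbabilityMeasure (stateDist ρ₁ P π t) := by
  induction t with
  | zero => assumption
  | succ t ih =>
    rw [stateDist_succ]
    infer_instance

lemma integral_stateDist_succ {f : S → ℝ} (hf : BoundedMeasurable f) (t : ℕ) :
    ∫ s, f s ∂stateDist ρ₁ P π (t + 1) =
      ∫ s, ∫ a, ∫ s', f s' ∂P (s, a) ∂π t s ∂stateDist ρ₁ P π t := by
  rw [stateDist_succ, Measure.integral_comp (hf.integrable _)]
  congr with s : 1
  rw [stepKernel_apply]
  exact Measure.integral_comp (κ := P.comap (Prod.mk s) measurable_prodMk_left)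
    (hf.integrable _)

end

section

variable (P : Kernel (S × A) S) (π : ℕ → Kernel S A) {r : ℕ → S → A → ℝ} {T : ℕ}

lemma Vfun_horizon : Vfun P π r T T = 0 := by
  ext s
  simp [Vfun, Vk]

lemma Vfun_eq_integral_Qfun {t : ℕ} (ht : t < T) (s : S) :
    Vfun P π r T t s = ∫ a, Qfun P π r T t s a ∂π t s := by
  obtain ⟨k, hk⟩ : ∃ k, T - t = k + 1 := ⟨T - (t + 1), by omega⟩
  rw [Vfun, hk, Vk, show T - (k + 1) = t by omega, show k = T - (t + 1) by omega]
  rfl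

lemma reward_eq_Adv_add (t : ℕ) (s : S) (a : A) :
    r t s a = Adv P π r T t s a + (Vfun P π r T t s - ∫ s', Vfun P π r T (t + 1) s' ∂P (s, a)) := by
  simp only [Adv, Qfun, Vfun]
  ring

variable [IsMarkovKernel P] [∀ t, IsMarkovKernel (π t)]

lemma boundedMeasurable_Vk (hr : ∀ t, BoundedMeasurable (Function.uncurry (r t))) (k : ℕ) :
    BoundedMeasurable (Vk P π r T k) := by
  induction k with
  | zero => exact BoundedMeasurable.const 0
  | succ k ih => exact ((hr _).add ((ih.comp measurable_snd).integral_kernel P)).integral_kernel _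

lemma boundedMeasurable_Vfun (hr : ∀ t, BoundedMeasurable (Function.uncurry (r t))) (t : ℕ) :
    BoundedMeasurable (Vfun P π r T t) :=
  boundedMeasurable_Vk P π hr _

lemma boundedMeasurable_Qfun (hr : ∀ t, BoundedMeasurable (Function.uncurry (r t))) (t : ℕ) :
    BoundedMeasurable (Function.uncurry (Qfun P π r T t)) :=
  (hr t).add (((boundedMeasurable_Vk P π hr _).comp measurable_snd).integral_kernel P)

lemma boundedMeasurable_Adv (hr : ∀ t, BoundedMeasurable (Function.uncurry (r t))) (t : ℕ) :
    BoundedMeasurable (Function.uncurry (Adv P π r T t)) :=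
  (boundedMeasurable_Qfun P π hr t).sub ((boundedMeasurable_Vfun P π hr t).comp measurable_fst)

lemma integral_Adv_self (hr : ∀ t, BoundedMeasurable (Function.uncurry (r t))) {t : ℕ}
    (ht : t < T) (s : S) : ∫ a, Adv P π r T t s a ∂π t s = 0 := by
  have hQ : Integrable (Qfun P π r T t s) (π t s) :=
    ((boundedMeasurable_Qfun P π hr t).comp measurable_prodMk_left).integrable _
  simp only [Adv]
  rw [integral_sub hQ (integrable_const _), ← Vfun_eq_integral_Qfun P π ht]
  simp

lemma integral_reward_eq (hr : ∀ t, BoundedMeasurable (Function.uncurry (r t)))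
    (μ : Measure A) [IsProbabilityMeasure μ] (t : ℕ) (s : S) :
    ∫ a, r t s a ∂μ = ∫ a, Adv P π r T t s a ∂μ +
      (Vfun P π r T t s - ∫ a, ∫ s', Vfun P π r T (t + 1) s' ∂P (s, a) ∂μ) := by
  have hA_int : Integrable (fun a => Adv P π r T t s a) μ :=
    ((boundedMeasurable_Adv P π hr t).comp measurable_prodMk_left).integrable _
  have hPV_int : Integrable (fun a => ∫ s', Vfun P π r T (t + 1) s' ∂P (s, a)) μ :=
    ((((boundedMeasurable_Vfun P π hr (t + 1)).comp measurable_snd).integral_kernel P).comp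
      measurable_prodMk_left).integrable _
  have hsub_int : Integrable (fun a =>
      Vfun P π r T t s - ∫ s', Vfun P π r T (t + 1) s' ∂P (s, a)) μ :=
    (integrable_const _).sub hPV_int
  simp_rw [reward_eq_Adv_add P π (r := r) (T := T) t s]
  rw [integral_add hA_int hsub_int, integral_sub (integrable_const _) hPV_int, integral_const,
    probReal_univ, one_smul]

end

section

variable (ρ₁ : Measure S) [IsProbabilityMeasure ρ₁] (P : Kernel (S × A) S) [IsMarkovKernel P]
  {r : ℕ → S → A → ℝ} {T : ℕ} (p q : ℕ → Kernel S A) [∀ t, IsMarkovKernel (p t)]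
  [∀ t, IsMarkovKernel (q t)]

lemma integral_integral_reward_eq (hr : ∀ t, BoundedMeasurable (Function.uncurry (r t)))
    (t : ℕ) :
    ∫ s, ∫ a, r t s a ∂p t s ∂stateDist ρ₁ P p t =
      ∫ s, ∫ a, Adv P q r T t s a ∂p t s ∂stateDist ρ₁ P p t +
        (∫ s, Vfun P q r T t s ∂stateDist ρ₁ P p t -
          ∫ s, Vfun P q r T (t + 1) s ∂stateDist ρ₁ P p (t + 1)) := by
  have hV := boundedMeasurable_Vfun P q (T := T) hr t
  have hA_int : Integrable (fun s => ∫ a, Adv P q r T t s a ∂p t s) (stateDist ρ₁ P p t) :=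
    ((boundedMeasurable_Adv P q hr t).integral_kernel (p t)).integrable _
  have hPV_int : Integrable (fun s => ∫ a, ∫ s', Vfun P q r T (t + 1) s' ∂P (s, a) ∂p t s)
      (stateDist ρ₁ P p t) :=
    ((((boundedMeasurable_Vfun P q hr (t + 1)).comp measurable_snd).integral_kernel
      P).integral_kernel (p t)).integrable _
  have hsub_int : Integrable (fun s => Vfun P q r T t s -
      ∫ a, ∫ s', Vfun P q r T (t + 1) s' ∂P (s, a) ∂p t s) (stateDist ρ₁ P p t) :=
    (hV.integrable _).sub hPV_int
  simp_rw [integral_reward_eq P q (T := T) hr]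
  rw [integral_add hA_int hsub_int, integral_sub (hV.integrable _) hPV_int,
    integral_stateDist_succ P ρ₁ p (boundedMeasurable_Vfun P q hr (t + 1))]

theorem policyReturn_eq_integral_Vfun_add
    (hr : ∀ t, BoundedMeasurable (Function.uncurry (r t))) :
    policyReturn ρ₁ P r T p = ∫ s, Vfun P q r T 0 s ∂ρ₁ +
      ∑ t ∈ Finset.range T, ∫ s, ∫ a, Adv P q r T t s a ∂p t s ∂stateDist ρ₁ P p t := by
  rw [policyReturn, Finset.sum_congr rfl fun t _ => integral_integral_reward_eq ρ₁ P p q hr t,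
    Finset.sum_add_distrib,
    Finset.sum_range_sub' (fun t => ∫ s, Vfun P q r T t s ∂stateDist ρ₁ P p t), Vfun_horizon]
  simp [stateDist, add_comm]

theorem policyReturn_sub_policyReturn
    (hr : ∀ t, BoundedMeasurable (Function.uncurry (r t))) :
    policyReturn ρ₁ P r T p - policyReturn ρ₁ P r T q =
      ∑ t ∈ Finset.range T, ∫ s, ∫ a, Adv P q r T t s a ∂p t s ∂stateDist ρ₁ P p t := by
  have hq : ∑ t ∈ Finset.range T, ∫ s, ∫ a, Adv P q r T t s a ∂q t s ∂stateDist ρ₁ P q t = 0 :=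
    Finset.sum_eq_zero fun t ht => by simp [integral_Adv_self P q hr (Finset.mem_range.mp ht)]
  rw [policyReturn_eq_integral_Vfun_add ρ₁ P p q hr, policyReturn_eq_integral_Vfun_add ρ₁ P q q hr,
    hq]
  ring

end

/-- **Lemma 2**: for any two policies `p` and `q`, with `ε_t = KL(ρ_t^p ‖ ρ_t^q)` assumed finite
and `δ_t = sup_s |E_{a ∼ p_t(·|s)}[A_t^q(s,a)]|`,
`J(p) − J(q) ≥ Σ_t E_{s ∼ ρ_t^q, a ∼ p_t(·|s)}[A_t^q(s,a)] − 2 Σ_t δ_t √(ε_t/2)`. -/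
theorem perf_diff_kl_bound
    (ρ₁ : Measure S) [IsProbabilityMeasure ρ₁]
    (P : Kernel (S × A) S) [IsMarkovKernel P]
    (T : ℕ) (r : ℕ → S → A → ℝ)
    (hr_meas : ∀ t, Measurable (Function.uncurry (r t)))
    (hr_bdd : ∀ t, ∃ C : ℝ, ∀ s a, |r t s a| ≤ C)
    (p q : ℕ → Kernel S A) [∀ t, IsMarkovKernel (p t)] [∀ t, IsMarkovKernel (q t)]
    (hε : ∀ t ∈ Finset.range T, klDiv (stateDist ρ₁ P p t) (stateDist ρ₁ P q t) ≠ ⊤) :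
    policyReturn ρ₁ P r T p - policyReturn ρ₁ P r T q ≥
      (∑ t ∈ Finset.range T,
        ∫ s, ∫ a, Adv P q r T t s a ∂(p t s) ∂(stateDist ρ₁ P q t)) -
      2 * ∑ t ∈ Finset.range T,
        (⨆ s : S, |∫ a, Adv P q r T t s a ∂(p t s)|) *
          Real.sqrt ((klDiv (stateDist ρ₁ P p t) (stateDist ρ₁ P q t)).toReal / 2) := by
  have hr (t : ℕ) : BoundedMeasurable (Function.uncurry (r t)) :=
    ⟨hr_meas t, (hr_bdd t).imp fun C hC sa => hC sa.1 sa.2⟩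
  rw [policyReturn_sub_policyReturn ρ₁ P p q hr, ge_iff_le, Finset.mul_sum,
    ← Finset.sum_sub_distrib]
  refine Finset.sum_le_sum fun t ht => ?_
  have hg : BoundedMeasurable fun s => ∫ a, Adv P q r T t s a ∂p t s :=
    (boundedMeasurable_Adv P q hr t).integral_kernel (p t)
  have hkl : klDiv (stateDist ρ₁ P p t) (stateDist ρ₁ P q t) =
      InformationTheory.klDiv (stateDist ρ₁ P p t) (stateDist ρ₁ P q t) :=
    klDiv_eq_klDiv (by simp)
  have hpinsker := InformationTheory.abs_integral_sub_integral_le_of_klDiv_ne_top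
    (hkl ▸ hε t ht) hg.1.aestronglyMeasurable fun s => le_ciSup hg.bddAbove_range_abs s
  rw [hkl]
  linarith [(abs_le.mp hpinsker).1]

end MDP
end
end

section
/- Mean-term bound (Appendix B): Let M be a real symmetric positive semidefinite n × n matrix, Σ_q a real symmetric positive definite n × n matrix, μ_p, μ_q ∈ ℝⁿ, and ε_t, ε ≥ 0. If (μ_p − μ_q)ᵀ Σ_q⁻¹ (μ_p − μ_q) ≤ 2 ε_t and μ_qᵀ M μ_q + trace(M Σ_q) ≤ 2 ε, then μ_pᵀ M μ_p ≤ 2 ε (1 + 2 ε_t). -/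
/-!
Write `μp = μq + v`, so that `μpᵀ M μp = a + 2c + b` with `a = μqᵀ M μq`, `c = μqᵀ M v` and
`b = vᵀ M v`. Cauchy–Schwarz for the form of `M` gives `c² ≤ a b`. Factoring `M = Bᵀ B` and
applying Cauchy–Schwarz for the form of `Σ_q` to each row `Bᵢ` of `B`,
`(Bᵢ ⬝ v)² = (Bᵢᵀ Σ_q (Σ_q⁻¹ v))² ≤ (Bᵢᵀ Σ_q Bᵢ) (vᵀ Σ_q⁻¹ v)`, and summing over `i` gives
`b ≤ tr(M Σ_q) · vᵀ Σ_q⁻¹ v`. By AM–GM, `a + 2c + b ≤ (a + tr(M Σ_q)) (1 + vᵀ Σ_q⁻¹ v)`.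
-/

open Matrix
open scoped MatrixOrder

namespace Matrix

variable {ι : Type*} [Fintype ι]

theorem PosSemidef.sq_dotProduct_mulVec_le {M : Matrix ι ι ℝ} (hM : M.PosSemidef) (x y : ι → ℝ) :
    (x ⬝ᵥ (M *ᵥ y)) ^ 2 ≤ (x ⬝ᵥ (M *ᵥ x)) * (y ⬝ᵥ (M *ᵥ y)) := by
  let := M.toSeminormedAddCommGroup hM
  let := M.toInnerProductSpace hM
  have hinner : ∀ u v : ι → ℝ, inner ℝ u v = u ⬝ᵥ (M *ᵥ v) := fun u v => by
    change (M *ᵥ v) ⬝ᵥ star u = _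
    simp [dotProduct_comm]
  simpa only [hinner, sq] using real_inner_mul_inner_self_le x y

theorem trace_transpose_mul_self_mul {R : Type*} [CommSemiring R] (B S : Matrix ι ι R) :
    (Bᵀ * B * S).trace = ∑ i, B i ⬝ᵥ (S *ᵥ B i) := by
  rw [mul_assoc, trace_mul_comm, mul_assoc]
  simp [trace, mul_apply, mulVec, dotProduct]

section

variable [DecidableEq ι]

theorem PosDef.sq_dotProduct_le {S : Matrix ι ι ℝ} (hS : S.PosDef) (a x : ι → ℝ) :
    (a ⬝ᵥ x) ^ 2 ≤ (a ⬝ᵥ (S *ᵥ a)) * (x ⬝ᵥ (S⁻¹ *ᵥ x)) := by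
  have hSS : S * S⁻¹ = 1 := S.mul_nonsing_inv (S.isUnit_iff_isUnit_det.mp hS.isUnit)
  have key := hS.posSemidef.sq_dotProduct_mulVec_le a (S⁻¹ *ᵥ x)
  rwa [mulVec_mulVec, hSS, one_mulVec, dotProduct_comm (S⁻¹ *ᵥ x)] at key

theorem PosSemidef.exists_eq_transpose_mul_self {M : Matrix ι ι ℝ} (hM : M.PosSemidef) :
    ∃ B : Matrix ι ι ℝ, M = Bᵀ * B := by
  obtain ⟨B, rfl⟩ := CStarAlgebra.nonneg_iff_eq_star_mul_self.mp hM.nonneg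
  exact ⟨B, by simp [star_eq_conjTranspose]⟩

theorem PosSemidef.trace_mul_nonneg {M S : Matrix ι ι ℝ} (hM : M.PosSemidef) (hS : S.PosSemidef) :
    0 ≤ (M * S).trace := by
  obtain ⟨B, rfl⟩ := hM.exists_eq_transpose_mul_self
  rw [trace_transpose_mul_self_mul]
  exact Finset.sum_nonneg fun i _ => by simpa using hS.dotProduct_mulVec_nonneg (B i)

theorem PosSemidef.dotProduct_mulVec_le_trace_mul {M S : Matrix ι ι ℝ} (hM : M.PosSemidef)
    (hS : S.PosDef) (x : ι → ℝ) :
    x ⬝ᵥ (M *ᵥ x) ≤ (M * S).trace * (x ⬝ᵥ (S⁻¹ *ᵥ x)) := by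
  obtain ⟨B, rfl⟩ := hM.exists_eq_transpose_mul_self
  have hquad : x ⬝ᵥ ((Bᵀ * B) *ᵥ x) = ∑ i, (B i ⬝ᵥ x) ^ 2 := by
    rw [← mulVec_mulVec, dotProduct_mulVec, vecMul_transpose]
    simp [dotProduct, sq, mulVec]
  rw [hquad, trace_transpose_mul_self_mul, Finset.sum_mul]
  exact Finset.sum_le_sum fun i _ => hS.sq_dotProduct_le (B i) x

end

theorem IsSymm.add_dotProduct_mulVec_add {R : Type*} [CommSemiring R] {M : Matrix ι ι R}
    (hM : M.IsSymm) (x y : ι → R) :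
    (x + y) ⬝ᵥ (M *ᵥ (x + y)) = x ⬝ᵥ (M *ᵥ x) + 2 * (x ⬝ᵥ (M *ᵥ y)) + y ⬝ᵥ (M *ᵥ y) := by
  have hsymm : y ⬝ᵥ (M *ᵥ x) = x ⬝ᵥ (M *ᵥ y) := by
    rw [dotProduct_mulVec, ← mulVec_transpose, hM.eq, dotProduct_comm]
  rw [mulVec_add, dotProduct_add, add_dotProduct, add_dotProduct, hsymm]
  ring

end Matrix

theorem add_two_mul_add_le_mul_one_add {a b c T s : ℝ} (ha : 0 ≤ a) (hT : 0 ≤ T) (hs : 0 ≤ s)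
    (hc : c ^ 2 ≤ a * b) (hb : b ≤ T * s) : a + 2 * c + b ≤ (a + T) * (1 + s) := by
  -- AM–GM: `2c ≤ 2 √(a s · T) ≤ a s + T`
  have hc' : c ^ 2 ≤ (a * s) * T := by nlinarith
  have h2c : 2 * c ≤ a * s + T := by nlinarith [sq_nonneg (a * s - T), mul_nonneg ha hs]
  nlinarith

theorem mean_term_bound_general {n : ℕ} (M Sq : Matrix (Fin n) (Fin n) ℝ)
    (hM : M.PosSemidef) (hSq : Sq.PosDef)
    (μp μq : Fin n → ℝ) (εt ε : ℝ)
    (h1 : (μp - μq) ⬝ᵥ (Sq⁻¹ *ᵥ (μp - μq)) ≤ 2 * εt)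
    (h2 : μq ⬝ᵥ (M *ᵥ μq) + (M * Sq).trace ≤ 2 * ε) :
    μp ⬝ᵥ (M *ᵥ μp) ≤ 2 * ε * (1 + 2 * εt) := by
  set v := μp - μq
  have hμp : μp = μq + v := (add_sub_cancel μq μp).symm
  have hq : 0 ≤ μq ⬝ᵥ (M *ᵥ μq) := by simpa using hM.dotProduct_mulVec_nonneg μq
  have hT : 0 ≤ (M * Sq).trace := hM.trace_mul_nonneg hSq.posSemidef
  have hv : 0 ≤ v ⬝ᵥ (Sq⁻¹ *ᵥ v) := by simpa using hSq.inv.posSemidef.dotProduct_mulVec_nonneg v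
  calc μp ⬝ᵥ (M *ᵥ μp)
      = μq ⬝ᵥ (M *ᵥ μq) + 2 * (μq ⬝ᵥ (M *ᵥ v)) + v ⬝ᵥ (M *ᵥ v) := by
        rw [hμp, (isHermitian_iff_isSymm.mp hM.isHermitian).add_dotProduct_mulVec_add]
    _ ≤ (μq ⬝ᵥ (M *ᵥ μq) + (M * Sq).trace) * (1 + v ⬝ᵥ (Sq⁻¹ *ᵥ v)) :=
        add_two_mul_add_le_mul_one_add hq hT hv (hM.sq_dotProduct_mulVec_le μq v)
          (hM.dotProduct_mulVec_le_trace_mul hSq v)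
    _ ≤ 2 * ε * (1 + 2 * εt) := mul_le_mul h2 (by linarith) (by linarith) (by linarith)

/-- Let `M` be real symmetric positive semidefinite, `Σ_q` real symmetric positive definite,
`μ_p, μ_q ∈ ℝⁿ` and `ε_t, ε ≥ 0`. If `(μ_p − μ_q)ᵀ Σ_q⁻¹ (μ_p − μ_q) ≤ 2 ε_t` and
`μ_qᵀ M μ_q + trace(M Σ_q) ≤ 2 ε`, then `μ_pᵀ M μ_p ≤ 2 ε (1 + 2 ε_t)`. -/
theorem mean_term_bound {n : ℕ} (M Sq : Matrix (Fin n) (Fin n) ℝ)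
    (hM : M.PosSemidef) (hSq : Sq.PosDef)
    (μp μq : Fin n → ℝ) (εt ε : ℝ) (hεt : 0 ≤ εt) (hε : 0 ≤ ε)
    (h1 : (μp - μq) ⬝ᵥ (Sq⁻¹ *ᵥ (μp - μq)) ≤ 2 * εt)
    (h2 : μq ⬝ᵥ (M *ᵥ μq) + (M * Sq).trace ≤ 2 * ε) :
    μp ⬝ᵥ (M *ᵥ μp) ≤ 2 * ε * (1 + 2 * εt) :=
  mean_term_bound_general M Sq hM hSq μp μq εt ε h1 h2
end
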